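/- Let (Ω, F, P) be a probability space, x ∈ ℝ^d, let X̂ : Ω → ℝ^d be a square-integrable random vector and λ : Ω → ℝ a square-integrable random variable. Let I : ℝ^d → ℝ be twice continuously differentiable with |∇I(z)| ≤ L and ‖∇²I(z)‖ ≤ M for all z ∈ ℝ^d, and define X̄ = X̂ + λ∇I(X̂). Then E[|X̄ − X̂|²] ≤ L²·E[λ²] and |E[X̄ − X̂]| ≤ L·|E[λ]| + M·(E[|X̂ − x|²])^{1/2}·(E[λ²])^{1/2}. -/

import Mathlib

/-!
Pointwise, `X̄ - X̂ = λ ∇I(X̂)`, so the first bound is just `|∇I| ≤ L`. For the mean, split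
`λ ∇I(X̂) = λ ∇I(x) + λ (∇I(X̂) - ∇I(x))`: the first term contributes `|E[λ]| |∇I(x)|`, and by
the mean value inequality the Hessian bound makes `∇I` `M`-Lipschitz, so the second is at most
`M E[|λ| |X̂ - x|]`, which Cauchy–Schwarz bounds by `M (E[|X̂ - x|²])^{1/2} (E[λ²])^{1/2}`.
-/

open MeasureTheory ProbabilityTheory
open scoped NNReal

theorem ContDiff.gradient {E : Type*} [NormedAddCommGroup E] [InnerProductSpace ℝ E]
    [CompleteSpace E] {n : WithTop ℕ∞} {f : E → ℝ} (hf : ContDiff ℝ (n + 1) f) :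
    ContDiff ℝ n (_root_.gradient f) :=
  (InnerProductSpace.toDual ℝ E).symm.contDiff.comp (hf.fderiv_right le_rfl)

section Integrals

variable {α E F : Type*} [MeasurableSpace α] {μ : Measure α}
  [NormedAddCommGroup E] [NormedAddCommGroup F]

theorem integral_norm_mul_norm_le_sqrt_mul_sqrt {f : α → E} {g : α → F}
    (hf : MemLp f 2 μ) (hg : MemLp g 2 μ) :
    ∫ a, ‖f a‖ * ‖g a‖ ∂μ ≤ √(∫ a, ‖f a‖ ^ 2 ∂μ) * √(∫ a, ‖g a‖ ^ 2 ∂μ) := by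
  have h2 : ENNReal.ofReal 2 = 2 := by norm_num
  have := integral_mul_norm_le_Lp_mul_Lq (μ := μ) Real.HolderConjugate.two_two
    (h2 ▸ hf.norm) (h2 ▸ hg.norm)
  simpa only [norm_norm, Real.rpow_two, Real.sqrt_eq_rpow, one_div] using this

variable [NormedSpace ℝ F] {lam : α → ℝ}

theorem integral_norm_smul_sq_le {V : α → F} {L : ℝ}
    (hlam : Integrable (fun a => lam a ^ 2) μ) (hV : ∀ a, ‖V a‖ ≤ L) :
    ∫ a, ‖lam a • V a‖ ^ 2 ∂μ ≤ L ^ 2 * ∫ a, lam a ^ 2 ∂μ := by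
  rw [← integral_const_mul]
  refine integral_mono_of_nonneg (ae_of_all _ fun a => by positivity) (hlam.const_mul _)
    (ae_of_all _ fun a => ?_)
  have hL : ‖V a‖ ^ 2 ≤ L ^ 2 := pow_le_pow_left₀ (norm_nonneg _) (hV a) 2
  calc ‖lam a • V a‖ ^ 2 = ‖V a‖ ^ 2 * lam a ^ 2 := by
        rw [norm_smul, Real.norm_eq_abs, mul_pow, sq_abs, mul_comm]
    _ ≤ L ^ 2 * lam a ^ 2 := by gcongr

variable {X : α → E} {g : E → F} {K : ℝ≥0}

theorem LipschitzWith.norm_smul_sub_le (hg : LipschitzWith K g) (c : ℝ) (y z : E) :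
    ‖c • (g y - g z)‖ ≤ K * (‖y - z‖ * ‖c‖) := by
  rw [norm_smul, mul_comm ‖y - z‖, mul_left_comm]
  exact mul_le_mul_of_nonneg_left (hg.norm_sub_le y z) (norm_nonneg c)

theorem norm_integral_smul_sub_le (x : E) (hX : MemLp (fun a => X a - x) 2 μ)
    (hlam : MemLp lam 2 μ) (hg : LipschitzWith K g) :
    ‖∫ a, lam a • (g (X a) - g x) ∂μ‖ ≤
      K * √(∫ a, ‖X a - x‖ ^ 2 ∂μ) * √(∫ a, lam a ^ 2 ∂μ) := by
  have hprod : Integrable (fun a => ‖X a - x‖ * ‖lam a‖) μ :=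
    hX.norm.integrable_mul hlam.norm
  have hCS := integral_norm_mul_norm_le_sqrt_mul_sqrt hX hlam
  simp only [Real.norm_eq_abs, sq_abs] at hCS
  calc ‖∫ a, lam a • (g (X a) - g x) ∂μ‖
      ≤ ∫ a, ‖lam a • (g (X a) - g x)‖ ∂μ := norm_integral_le_integral_norm _
    _ ≤ ∫ a, K * (‖X a - x‖ * ‖lam a‖) ∂μ :=
        integral_mono_of_nonneg (ae_of_all _ fun _ => norm_nonneg _) (hprod.const_mul _)
          (ae_of_all _ fun a => hg.norm_smul_sub_le _ _ _)
    _ = K * ∫ a, ‖X a - x‖ * |lam a| ∂μ := by simp only [integral_const_mul, Real.norm_eq_abs]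
    _ ≤ K * (√(∫ a, ‖X a - x‖ ^ 2 ∂μ) * √(∫ a, lam a ^ 2 ∂μ)) := by gcongr
    _ = K * √(∫ a, ‖X a - x‖ ^ 2 ∂μ) * √(∫ a, lam a ^ 2 ∂μ) := (mul_assoc _ _ _).symm

theorem norm_integral_smul_comp_le [CompleteSpace F] [IsFiniteMeasure μ] (x : E)
    (hX : MemLp X 2 μ) (hlam : MemLp lam 2 μ) (hg : LipschitzWith K g) {L : ℝ}
    (hgx : ‖g x‖ ≤ L) :
    ‖∫ a, lam a • g (X a) ∂μ‖ ≤
      L * |∫ a, lam a ∂μ| + K * √(∫ a, ‖X a - x‖ ^ 2 ∂μ) * √(∫ a, lam a ^ 2 ∂μ) := by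
  have hXx : MemLp (fun a => X a - x) 2 μ := hX.sub (memLp_const x)
  have hlam₁ : Integrable lam μ := hlam.integrable one_le_two
  have hvar : Integrable (fun a => lam a • (g (X a) - g x)) μ :=
    ((hXx.norm.integrable_mul hlam.norm).const_mul K).mono'
      (hlam.1.smul ((hg.continuous.comp_aestronglyMeasurable hX.1).sub aestronglyMeasurable_const))
      (ae_of_all _ fun a => hg.norm_smul_sub_le _ _ _)
  have hsplit : ∫ a, lam a • g (X a) ∂μ =
      ∫ a, lam a • (g (X a) - g x) ∂μ + (∫ a, lam a ∂μ) • g x := by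
    rw [← integral_smul_const, ← integral_add hvar (hlam₁.smul_const _)]
    simp only [smul_sub, sub_add_cancel]
  have hconst : ‖(∫ a, lam a ∂μ) • g x‖ ≤ L * |∫ a, lam a ∂μ| := by
    rw [norm_smul, Real.norm_eq_abs, mul_comm]
    exact mul_le_mul_of_nonneg_right hgx (abs_nonneg _)
  rw [hsplit]
  linarith [norm_add_le (∫ a, lam a • (g (X a) - g x) ∂μ) ((∫ a, lam a ∂μ) • g x),
    norm_integral_smul_sub_le x hXx hlam hg]

end Integrals

/-- Bounds comparing the projected approximation `X̄ = X̂ + λ∇I(X̂)` with the supporting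
approximation `X̂`: `E[|X̄ − X̂|²] ≤ L²E[λ²]` and
`|E[X̄ − X̂]| ≤ L|E[λ]| + M (E[|X̂ − x|²])^{1/2} (E[λ²])^{1/2}`. -/
theorem projected_vs_supporting_bounds {Ω : Type*} [MeasureSpace Ω]
    [IsProbabilityMeasure (ℙ : Measure Ω)]
    (d : ℕ) (x : EuclideanSpace ℝ (Fin d))
    (Xhat : Ω → EuclideanSpace ℝ (Fin d)) (hXhat : MemLp Xhat 2 ℙ)
    (lam : Ω → ℝ) (hlam : MemLp lam 2 ℙ)
    (I : EuclideanSpace ℝ (Fin d) → ℝ) (hI : ContDiff ℝ 2 I) (L M : ℝ)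
    (hgrad : ∀ z : EuclideanSpace ℝ (Fin d), ‖gradient I z‖ ≤ L)
    (hHess : ∀ z : EuclideanSpace ℝ (Fin d), ‖fderiv ℝ (fun w => gradient I w) z‖ ≤ M) :
    (∫ ω, ‖(Xhat ω + lam ω • gradient I (Xhat ω)) - Xhat ω‖ ^ 2 ∂(ℙ : Measure Ω) ≤
        L ^ 2 * ∫ ω, (lam ω) ^ 2 ∂(ℙ : Measure Ω)) ∧
    ‖∫ ω, ((Xhat ω + lam ω • gradient I (Xhat ω)) - Xhat ω) ∂(ℙ : Measure Ω)‖ ≤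
      L * |∫ ω, lam ω ∂(ℙ : Measure Ω)| +
        M * Real.sqrt (∫ ω, ‖Xhat ω - x‖ ^ 2 ∂(ℙ : Measure Ω)) * Real.sqrt (∫ ω, (lam ω) ^ 2 ∂(ℙ : Measure Ω)) := by
  have hM : 0 ≤ M := (norm_nonneg _).trans (hHess 0)
  have hlip : LipschitzWith M.toNNReal (gradient I) :=
    lipschitzWith_of_nnnorm_fderiv_le (hI.gradient.differentiable one_ne_zero) fun z => by
      rw [← NNReal.coe_le_coe, coe_nnnorm, Real.coe_toNNReal _ hM]
      exact hHess z
  simp only [add_sub_cancel_left]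
  refine ⟨integral_norm_smul_sq_le hlam.integrable_sq fun ω => hgrad _, ?_⟩
  simpa only [Real.coe_toNNReal _ hM] using norm_integral_smul_comp_le x hXhat hlam hlip (hgrad x)
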